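/- arXiv:2507.08809 — 7 statements merged into one kernel-verified Lean document; each statement's English description precedes it below -/
import Mathlib

section
/- Let F be a field, let A be an m×t superregular matrix over F, and let B be an invertible n×n matrix over F. Then the Kronecker product A ⊗ B (a matrix with rows indexed by Fin m × Fin n and columns indexed by Fin t × Fin n) is an n-block superregular matrix over F. -/
/-- A matrix over a field is superregular if every square submatrix is non-singular. -/
def IsSuperregular {F : Type*} [Field F] {I J : Type*} (A : Matrix I J F) : Prop :=
  ∀ (k : ℕ), 1 ≤ k → ∀ (r : Fin k → I) (c : Fin k → J),
    Function.Injective r → Function.Injective c →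
    (Matrix.of fun i j => A (r i) (c j)).det ≠ 0

/-- A matrix made of an `m × t` array of `b × b` blocks is `b`-block superregular if every
square submatrix consisting of full blocks is non-singular. -/
def IsBlockSuperregular {F : Type*} [Field F] {m t : ℕ} {β : Type*} [Fintype β]
    [DecidableEq β] (A : Matrix (Fin m × β) (Fin t × β) F) : Prop :=
  ∀ (k : ℕ), 1 ≤ k → ∀ (r : Fin k → Fin m) (c : Fin k → Fin t),
    Function.Injective r → Function.Injective c →
    (Matrix.of fun (i j : Fin k × β) => A (r i.1, i.2) (c j.1, j.2)).det ≠ 0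

theorem kronecker_isBlockSuperregular {F : Type*} [Field F] {m t n : ℕ}
    (A : Matrix (Fin m) (Fin t) F) (B : Matrix (Fin n) (Fin n) F)
    (hA : IsSuperregular A) (hB : IsUnit B) :
    IsBlockSuperregular (Matrix.kroneckerMap (· * ·) A B) := by
  intro k hk r c hr hc
  have h : (Matrix.of fun (i j : Fin k × Fin n) =>
      Matrix.kroneckerMap (· * ·) A B (r i.1, i.2) (c j.1, j.2)) =
      Matrix.kroneckerMap (· * ·) (Matrix.of fun i j => A (r i) (c j)) B := rfl
  rw [h, Matrix.det_kronecker]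
  exact mul_ne_zero (pow_ne_zero _ (hA k hk r c hr hc))
    (pow_ne_zero _ ((Matrix.isUnit_iff_isUnit_det B).mp hB).ne_zero)
end

section
/- Let F be a field, let l ≥ 1, and for 1 ≤ i ≤ l let A_i be a square superregular matrix over F of size n_i × n_i; let B be an invertible n×n matrix over F. Then the iterated Kronecker product M = A_1 ⊗ (A_2 ⊗ (⋯ ⊗ (A_l ⊗ B))) is a square matrix of size Nn × Nn, where N = n_1·n_2·⋯·n_l, and M is block superregular with block size (Nn)/n_1 = n_2·⋯·n_l·n; that is, viewing M as an n_1 × n_1 array of ((Nn)/n_1)×((Nn)/n_1) blocks, every square submatrix of M consisting of full blocks is non-singular. -/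
/-- The index type of the iterated Kronecker product
`A 0 ⊗ (A 1 ⊗ (⋯ ⊗ (A (l-1) ⊗ B)))`, where `A i` has size `d i × d i` and `B` has
size `nb × nb`. -/
def KronIndex : (l : ℕ) → (Fin l → ℕ) → ℕ → Type
  | 0, _, nb => Fin nb
  | l + 1, d, nb => Fin (d 0) × KronIndex l (fun i => d i.succ) nb

instance instFintypeKronIndex : ∀ (l : ℕ) (d : Fin l → ℕ) (nb : ℕ),
    Fintype (KronIndex l d nb)
  | 0, _, nb => inferInstanceAs (Fintype (Fin nb))
  | l + 1, d, nb =>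
    letI := instFintypeKronIndex l (fun i => d i.succ) nb
    inferInstanceAs (Fintype (Fin (d 0) × KronIndex l (fun i => d i.succ) nb))

instance instDecidableEqKronIndex : ∀ (l : ℕ) (d : Fin l → ℕ) (nb : ℕ),
    DecidableEq (KronIndex l d nb)
  | 0, _, nb => inferInstanceAs (DecidableEq (Fin nb))
  | l + 1, d, nb =>
    letI := instDecidableEqKronIndex l (fun i => d i.succ) nb
    inferInstanceAs (DecidableEq (Fin (d 0) × KronIndex l (fun i => d i.succ) nb))

/-- The iterated Kronecker product `A 0 ⊗ (A 1 ⊗ (⋯ ⊗ (A (l-1) ⊗ B)))`. -/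
def iterKron {F : Type*} [Field F] {nb : ℕ} (B : Matrix (Fin nb) (Fin nb) F) :
    (l : ℕ) → (d : Fin l → ℕ) → (∀ i, Matrix (Fin (d i)) (Fin (d i)) F) →
      Matrix (KronIndex l d nb) (KronIndex l d nb) F
  | 0, _, _ => B
  | l + 1, d, A =>
    Matrix.kroneckerMap (· * ·) (A 0)
      (iterKron B l (fun i => d i.succ) (fun i => A i.succ))

/-!
A full-block submatrix of `A ⊗ M` is `A' ⊗ M` for the corresponding submatrix `A'` of `A`, and
`det (A' ⊗ M) = det A' ^ (size M) * det M ^ (size A')`. So `A 0 ⊗ M` is block superregular as soon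
as `A 0` is superregular and `M` is invertible, and the tail `M = A 1 ⊗ (⋯ ⊗ (A l ⊗ B))` is
invertible because each of its factors is.
-/

open Matrix

lemma card_kronIndex : ∀ (l : ℕ) (d : Fin l → ℕ) (nb : ℕ),
    Fintype.card (KronIndex l d nb) = (∏ i, d i) * nb
  | 0, _, nb => by rw [Fin.prod_univ_zero, one_mul]; exact Fintype.card_fin nb
  | l + 1, d, nb => by
    show Fintype.card (Fin (d 0) × KronIndex l (fun i => d i.succ) nb) = _
    rw [Fintype.card_prod, Fintype.card_fin, card_kronIndex l, Fin.prod_univ_succ, mul_assoc]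

section

variable {F : Type*} [Field F]

lemma IsSuperregular.det_ne_zero {ι : Type*} [Fintype ι] [DecidableEq ι]
    {A : Matrix ι ι F} (hA : IsSuperregular A) : A.det ≠ 0 := by
  rcases isEmpty_or_nonempty ι with hι | _
  · simp [det_isEmpty]
  let e := Fintype.equivFin ι
  rw [← det_submatrix_equiv_self e.symm A]
  exact hA _ Fintype.card_pos _ _ e.symm.injective e.symm.injective

lemma IsSuperregular.isBlockSuperregular_kronecker {m t : ℕ}
    {β : Type*} [Fintype β] [DecidableEq β] {A : Matrix (Fin m) (Fin t) F}
    (hA : IsSuperregular A) {M : Matrix β β F} (hM : M.det ≠ 0) :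
    IsBlockSuperregular (kroneckerMap (· * ·) A M) := by
  intro k hk r c hr hc
  have hblock : (of fun (i j : Fin k × β) => kroneckerMap (· * ·) A M (r i.1, i.2) (c j.1, j.2)) =
      kroneckerMap (· * ·) (of fun i j => A (r i) (c j)) M := rfl
  rw [hblock, det_kronecker]
  exact mul_ne_zero (pow_ne_zero _ (hA k hk r c hr hc)) (pow_ne_zero _ hM)

lemma det_iterKron_ne_zero {nb : ℕ}
    {B : Matrix (Fin nb) (Fin nb) F} (hB : B.det ≠ 0) :
    ∀ (l : ℕ) (d : Fin l → ℕ) (A : ∀ i, Matrix (Fin (d i)) (Fin (d i)) F),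
      (∀ i, (A i).det ≠ 0) → (iterKron B l d A).det ≠ 0
  | 0, _, _, _ => hB
  | l + 1, d, A, hA => by
    -- `rw [iterKron, det_kronecker]` fails: the index instances agree only up to unfolding
    have hkron : (iterKron B (l + 1) d A).det = _ :=
      det_kronecker (A 0) (iterKron B l (fun i => d i.succ) fun i => A i.succ)
    rw [hkron]
    exact mul_ne_zero (pow_ne_zero _ (hA 0))
      (pow_ne_zero _ (det_iterKron_ne_zero hB l _ _ fun i => hA i.succ))

end

/-- Theorem: if `A 0, …, A l` are square superregular matrices of sizes
`n_1, …, n_{l+1}` and `B` is an invertible `n × n` matrix, then the iterated Kronecker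
product `M = A 0 ⊗ (A 1 ⊗ (⋯ ⊗ (A l ⊗ B)))` is a square matrix of size `Nn × Nn`
(`N = n_1 ⋯ n_{l+1}`) which is block superregular with blocks of size
`Nn / n_1 = n_2 ⋯ n_{l+1} ⋅ n`. -/
theorem iterKron_isBlockSuperregular {F : Type*} [Field F] {l : ℕ}
    (d : Fin (l + 1) → ℕ) (A : ∀ i, Matrix (Fin (d i)) (Fin (d i)) F)
    {n : ℕ} (B : Matrix (Fin n) (Fin n) F)
    (hA : ∀ i, IsSuperregular (A i)) (hB : IsUnit B) :
    Fintype.card (KronIndex (l + 1) d n) = (∏ i, d i) * n ∧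
    Fintype.card (KronIndex l (fun i => d i.succ) n) = (∏ i : Fin l, d i.succ) * n ∧
    IsBlockSuperregular (iterKron B (l + 1) d A) := by
  have hBdet : B.det ≠ 0 := ((isUnit_iff_isUnit_det B).mp hB).ne_zero
  have htail : (iterKron B l (fun i => d i.succ) (fun i => A i.succ)).det ≠ 0 :=
    det_iterKron_ne_zero hBdet l _ _ fun i => (hA i.succ).det_ne_zero
  exact ⟨card_kronIndex _ _ _, card_kronIndex _ _ _,
    (hA 0).isBlockSuperregular_kronecker htail⟩
end

section
/- Let F be a field, let A = [a_{ij}] be an r×s superregular matrix over F, and let B, B_1, B_2, …, B_s be invertible n×n matrices over F. Then the rn × sn block matrix whose (i,j) block is a_{ij}·(B·B_j) (i.e., the matrix with rows indexed by Fin r × Fin n and columns indexed by Fin s × Fin n whose ((i,x),(j,y)) entry is a_{ij} times the (x,y) entry of B·B_j) is an n-block superregular matrix over F. -/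
/-- If `A` is an `r × s` superregular matrix and `B, B_1, …, B_s` are invertible `n × n`
matrices, then the block matrix whose `(i,j)` block is `a_{ij} • (B * B_j)` is an `n`-block
superregular matrix. -/
theorem isBlockSuperregular_smul_mul {F : Type*} [Field F] {r s n : ℕ}
    (A : Matrix (Fin r) (Fin s) F) (B : Matrix (Fin n) (Fin n) F)
    (Bs : Fin s → Matrix (Fin n) (Fin n) F)
    (hA : IsSuperregular A) (hB : IsUnit B) (hBs : ∀ j, IsUnit (Bs j)) :
    IsBlockSuperregular (Matrix.of fun (i : Fin r × Fin n) (j : Fin s × Fin n) =>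
      A i.1 j.1 * (B * Bs j.1) i.2 j.2) := by
  intro k hk rr cc hr hc
  haveI : NeZero k := ⟨by omega⟩
  have key : (Matrix.of fun (i j : Fin k × Fin n) =>
      (Matrix.of fun (i : Fin r × Fin n) (j : Fin s × Fin n) =>
        A i.1 j.1 * (B * Bs j.1) i.2 j.2) (rr i.1, i.2) (cc j.1, j.2)) =
      (Matrix.kroneckerMap (· * ·) (A.submatrix rr cc) B) *
      (Matrix.blockDiagonal (fun j => Bs (cc j))).submatrix
        (Equiv.prodComm (Fin k) (Fin n)) (Equiv.prodComm (Fin k) (Fin n)) := by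
    ext ⟨i, x⟩ ⟨j, y⟩
    simp only [Matrix.of_apply, Matrix.mul_apply, Matrix.submatrix_apply,
      Matrix.kroneckerMap_apply, Matrix.blockDiagonal_apply, Equiv.prodComm_apply,
      Prod.swap_prod_mk, Fintype.sum_prod_type]
    simp [mul_ite, Finset.sum_ite_eq', Finset.mul_sum, mul_assoc]
  rw [key, Matrix.det_mul, Matrix.det_submatrix_equiv_self, Matrix.det_blockDiagonal,
    Matrix.det_kronecker]
  refine mul_ne_zero (mul_ne_zero ?_ ?_) ?_
  · exact pow_ne_zero _ (hA k hk rr cc hr hc)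
  · exact pow_ne_zero _ (Matrix.isUnit_iff_isUnit_det B |>.mp hB).ne_zero
  · exact Finset.prod_ne_zero_iff.mpr fun j _ =>
      (Matrix.isUnit_iff_isUnit_det _ |>.mp (hBs (cc j))).ne_zero
end

section
/- Let K and L be fields, let n ≥ 1, and let ψ : L → Mat_n(K) be an injective ring homomorphism from L into the ring of n×n matrices over K. For an s×t matrix M = [m_{ij}] over L, let Ψ(M) denote the sn × tn block matrix with rows indexed by Fin s × Fin n and columns indexed by Fin t × Fin n whose ((i,x),(j,y)) entry is the (x,y) entry of ψ(m_{ij}). Then M is superregular over L if and only if Ψ(M) is an n-block superregular matrix over K. -/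
/-- Key lemma: the determinant of `N` over `L` is nonzero iff the determinant of the
block matrix obtained by applying `ψ` entrywise is nonzero. -/
lemma det_ne_zero_iff_block {K L : Type*} [Field K] [Field L]
    {n : ℕ} (hn : 1 ≤ n) (ψ : L →+* Matrix (Fin n) (Fin n) K)
    (hψ : Function.Injective ψ) {k : ℕ} (N : Matrix (Fin k) (Fin k) L) :
    N.det ≠ 0 ↔
      (Matrix.of fun (i j : Fin k × Fin n) => ψ (N i.1 j.1) i.2 j.2).det ≠ 0 := by
  set B : Matrix (Fin k × Fin n) (Fin k × Fin n) K :=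
    Matrix.of fun (i j : Fin k × Fin n) => ψ (N i.1 j.1) i.2 j.2 with hB
  have hBeq : B = Matrix.compRingEquiv (Fin k) (Fin n) K (N.map ψ) := by
    ext ⟨i, x⟩ ⟨j, y⟩
    rfl
  constructor
  · intro hdet
    have hu : IsUnit N := (Matrix.isUnit_iff_isUnit_det N).2 (isUnit_iff_ne_zero.2 hdet)
    have hu2 : IsUnit B := by
      rw [hBeq]
      exact ((Matrix.compRingEquiv (Fin k) (Fin n) K).toRingHom.comp
        ψ.mapMatrix).isUnit_map hu
    exact isUnit_iff_ne_zero.1 ((Matrix.isUnit_iff_isUnit_det B).1 hu2)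
  · intro hB0 hdet
    obtain ⟨v, hv, hvN⟩ := (Matrix.exists_mulVec_eq_zero_iff).2 hdet
    apply hB0
    rw [← Matrix.exists_mulVec_eq_zero_iff]
    obtain ⟨i0, hi0⟩ := Function.ne_iff.1 hv
    set y0 : Fin n := ⟨0, hn⟩
    refine ⟨fun p => ψ (v p.1) p.2 y0, ?_, ?_⟩
    · -- the vector is nonzero: ψ (v i0) is invertible, so its column y0 is nonzero
      have hi0' : v i0 ≠ 0 := by simpa using hi0
      have hu : IsUnit (ψ (v i0)) := (isUnit_iff_ne_zero.2 hi0').map ψ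
      intro h0
      have hcol : (ψ (v i0)).mulVec (Pi.single y0 (1:K)) = 0 := by
        ext x
        have := congrFun h0 (i0, x)
        simp only [Matrix.mulVec_single, Pi.zero_apply] at this ⊢
        simpa using this
      have : (Pi.single y0 (1:K) : Fin n → K) = 0 := by
        have hinj := Matrix.mulVec_injective_iff_isUnit.2 hu
        apply hinj
        simpa using hcol
      have := congrFun this y0
      simp at this
    · ext ⟨i, x⟩
      have key : (B.mulVec fun p => ψ (v p.1) p.2 y0) (i, x)
          = ψ ((N.mulVec v) i) x y0 := by
        calc (B.mulVec fun p => ψ (v p.1) p.2 y0) (i, x)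
            = ∑ p : Fin k × Fin n, ψ (N i p.1) x p.2 * ψ (v p.1) p.2 y0 := rfl
          _ = ∑ j, ∑ y, ψ (N i j) x y * ψ (v j) y y0 := Fintype.sum_prod_type _
          _ = ∑ j, (ψ (N i j) * ψ (v j)) x y0 := by
              simp [Matrix.mul_apply]
          _ = ∑ j, ψ (N i j * v j) x y0 := by simp [map_mul]
          _ = ψ (∑ j, N i j * v j) x y0 := by rw [map_sum]; simp [Matrix.sum_apply]
          _ = ψ ((N.mulVec v) i) x y0 := rfl
      rw [key, hvN]
      simp

/-- Given an injective ring homomorphism `ψ : L →+* Matₙ(K)`, a matrix `M` over `L` is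
superregular iff the block matrix `Ψ(M)` obtained by replacing each entry `m_{ij}` of `M`
by the `n × n` block `ψ(m_{ij})` is an `n`-block superregular matrix over `K`. -/
theorem isSuperregular_iff_isBlockSuperregular_map {K L : Type*} [Field K] [Field L]
    {n : ℕ} (hn : 1 ≤ n) (ψ : L →+* Matrix (Fin n) (Fin n) K)
    (hψ : Function.Injective ψ) {s t : ℕ} (M : Matrix (Fin s) (Fin t) L) :
    IsSuperregular M ↔
    IsBlockSuperregular (Matrix.of fun (i : Fin s × Fin n) (j : Fin t × Fin n) =>
      ψ (M i.1 j.1) i.2 j.2) := by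
  constructor
  · intro hM k hk r c hr hc
    exact (det_ne_zero_iff_block hn ψ hψ _).1 (hM k hk r c hr hc)
  · intro hM k hk r c hr hc
    exact (det_ne_zero_iff_block hn ψ hψ _).2 (hM k hk r c hr hc)
end

section
/- Let K be a finite field with q elements, let L be a field extension of K of degree n, and let α ∈ L be a primitive element (a generator of the multiplicative group Lˣ) whose minimal polynomial over K therefore has degree n. Let 𝓜 = [m̄_{il}] be an m×m superregular matrix over K. Let t and j be integers with t > 1, j > 1, j ≤ m, and j·(t−1) < n, and for 1 ≤ i ≤ j and 1 ≤ l ≤ m fix elements n_{il} ∈ K. Define the m×m matrix N over L by: N_{il} = (algebraMap K L m̄_{il})·α + (algebraMap K L n_{il})·α^t for 1 ≤ i ≤ j, and N_{il} = (algebraMap K L m̄_{il})·α for j < i ≤ m. Then N is superregular over L (and consequently so is any matrix obtained from N by permuting its rows). -/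
/-!
After factoring out `α`, a square submatrix of the perturbed matrix is the value at `α` of the
polynomial matrix `A + X ^ (t - 1) • B`, where `A` is the corresponding submatrix of `Mbar` and `B`
has at most `j` nonzero rows. The determinant of that polynomial matrix has constant term
`det A ≠ 0` and degree at most `j (t - 1) < n`, so it cannot vanish at `α`, whose minimal
polynomial has degree `n` because `α` generates `L` over `K`.
-/

open Polynomial Finset
open scoped IntermediateField

theorem Finset.card_filter_lt_le_of_injective {ι : Type*} [Fintype ι] {f : ι → ℕ}
    (hf : Function.Injective f) (j : ℕ) : #{i | f i < j} ≤ j := by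
  simpa using card_le_card_of_injOn f (t := range j) (fun i hi => by simpa using hi)
    hf.injOn

namespace Matrix

variable {R : Type*} [CommRing R] {ι : Type*} [Fintype ι] [DecidableEq ι]

theorem natDegree_det_le_sum_of_natDegree_le (P : Matrix ι ι R[X]) (d : ι → ℕ)
    (h : ∀ i l, (P i l).natDegree ≤ d i) : P.det.natDegree ≤ ∑ i, d i := by
  rw [det_apply]
  refine natDegree_sum_le_of_forall_le _ _ fun σ _ => (natDegree_smul_le _ _).trans ?_
  calc (∏ i, P (σ i) i).natDegree ≤ ∑ i, (P (σ i) i).natDegree := natDegree_prod_le _ _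
    _ ≤ ∑ i, d (σ i) := sum_le_sum fun i _ => h (σ i) i
    _ = ∑ i, d i := Equiv.sum_comp σ d

variable (A B : Matrix ι ι R) {d : ℕ}

theorem eval_zero_det_map_C_add_X_pow_smul (hd : d ≠ 0) :
    (A.map C + (X ^ d : R[X]) • B.map C).det.eval 0 = A.det := by
  rw [← coe_evalRingHom, RingHom.map_det]
  congr
  ext i l
  simp [hd]

theorem natDegree_det_map_C_add_X_pow_smul_le (s : Finset ι) (hB : ∀ i ∉ s, B i = 0) :
    (A.map C + (X ^ d : R[X]) • B.map C).det.natDegree ≤ d * #s := by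
  calc _ ≤ ∑ i, if i ∈ s then d else 0 :=
        natDegree_det_le_sum_of_natDegree_le _ _ fun i l => ?_
    _ = d * #s := by rw [sum_ite_mem, univ_inter, sum_const, smul_eq_mul, mul_comm]
  split_ifs with hi
  · simp only [add_apply, map_apply, smul_apply, smul_eq_mul]
    refine (natDegree_add_le _ _).trans (max_le (by simp) ?_)
    exact natDegree_mul_le.trans (by simpa using natDegree_X_pow_le d)
  · simp [hB i hi]

end Matrix

theorem Matrix.det_map_add_pow_smul_ne_zero {K L : Type*} [Field K] [CommRing L] [Algebra K L]
    {ι : Type*} [Fintype ι] [DecidableEq ι] {A B : Matrix ι ι K} (hA : A.det ≠ 0)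
    (s : Finset ι) (hB : ∀ i ∉ s, B i = 0) {α : L} {d : ℕ} (hd : d ≠ 0)
    (hdeg : d * #s < (minpoly K α).natDegree) :
    (A.map (algebraMap K L) + α ^ d • B.map (algebraMap K L)).det ≠ 0 := by
  set P := A.map C + (X ^ d : K[X]) • B.map C
  have hP : P.det ≠ 0 := fun h => hA <| by
    rw [← eval_zero_det_map_C_add_X_pow_smul A B hd, h, eval_zero]
  have hmap :
      (aeval α).mapMatrix P = A.map (algebraMap K L) + α ^ d • B.map (algebraMap K L) := by
    ext i l
    simp [P, mul_comm (α ^ d)]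
  rw [← hmap, ← AlgHom.map_det]
  intro h
  exact (natDegree_det_map_C_add_X_pow_smul_le A B s hB).not_gt <|
    hdeg.trans_le <| natDegree_le_natDegree <| minpoly.degree_le_of_ne_zero K α hP h

theorem IntermediateField.adjoin_simple_eq_top_of_forall_eq_pow {K L : Type*} [Field K]
    [Field L] [Algebra K L] {α : L} (hα : ∀ x : L, x ≠ 0 → ∃ i : ℕ, x = α ^ i) : K⟮α⟯ = ⊤ := by
  refine eq_top_iff.2 fun x _ => ?_
  obtain rfl | hx := eq_or_ne x 0
  · exact zero_mem _
  · obtain ⟨i, rfl⟩ := hα x hx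
    exact pow_mem (mem_adjoin_simple_self K α) i

theorem isSuperregular_rows_perturbation_general {K L : Type*} [Field K] [Field L]
    [Fintype L] [Algebra K L] {n : ℕ}
    (hn : Module.finrank K L = n)
    (α : L) (hα : ∀ x : L, x ≠ 0 → ∃ i : ℕ, x = α ^ i)
    {m : ℕ} (Mbar : Matrix (Fin m) (Fin m) K) (hMbar : IsSuperregular Mbar)
    (t j : ℕ) (ht : 1 < t) (hj : 1 < j) (hjtn : j * (t - 1) < n)
    (nc : Fin m → Fin m → K) :
    ∀ ω : Equiv.Perm (Fin m),
      IsSuperregular (Matrix.of fun i l : Fin m =>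
        if ((ω i : Fin m) : ℕ) < j then
          algebraMap K L (Mbar (ω i) l) * α + algebraMap K L (nc (ω i) l) * α ^ t
        else
          algebraMap K L (Mbar (ω i) l) * α) := by
  intro ω k hk r c hr hc
  have hdeg : (minpoly K α).natDegree = n := hn ▸
    (Field.primitive_element_iff_minpoly_natDegree_eq K α).1
      (IntermediateField.adjoin_simple_eq_top_of_forall_eq_pow hα)
  have hα0 : α ≠ 0 := by
    rintro rfl
    rw [minpoly.zero, natDegree_X] at hdeg
    have := Nat.mul_le_mul hj (show 1 ≤ t - 1 by omega)
    omega
  set A : Matrix (Fin k) (Fin k) K := .of fun i l => Mbar (ω (r i)) (c l)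
  set s : Finset (Fin k) := {i | (ω (r i) : ℕ) < j}
  set B : Matrix (Fin k) (Fin k) K := .of fun i l => if i ∈ s then nc (ω (r i)) (c l) else 0
  have hs : #s ≤ j := card_filter_lt_le_of_injective
    (Fin.val_injective.comp (ω.injective.comp hr)) j
  convert_to (α • (A.map (algebraMap K L) + α ^ (t - 1) • B.map (algebraMap K L))).det ≠ 0
    using 2
  · have hpow : α ^ t = α * α ^ (t - 1) := by rw [← pow_succ', Nat.sub_add_cancel ht.le]
    ext i l
    by_cases hi : (ω (r i) : ℕ) < j <;> simp [A, B, s, hi, hpow] <;> ring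
  rw [Matrix.det_smul]
  refine mul_ne_zero (pow_ne_zero _ hα0) (Matrix.det_map_add_pow_smul_ne_zero
    (hMbar k hk _ c (ω.injective.comp hr) hc) s (fun i hi => ?_) (by omega) ?_)
  · ext l
    simp [B, hi]
  · rw [hdeg]
    exact (Nat.mul_le_mul_left _ hs).trans_lt (by rwa [mul_comm])

/-- Let `K` be a finite field with `q` elements, `L` a degree-`n` extension of `K`, `α ∈ L` a
primitive element, and `𝓜 = [m̄_{il}]` an `m × m` superregular matrix over `K`. For integers
`t > 1`, `1 < j ≤ m` with `j (t - 1) < n` and coefficients `n_{il} ∈ K`, the matrix `N` over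
`L` whose first `j` rows are `N_{il} = m̄_{il} α + n_{il} α^t` and whose remaining rows are
`N_{il} = m̄_{il} α` is superregular over `L`, and consequently so is every matrix obtained
from `N` by permuting its rows. -/
theorem isSuperregular_rows_perturbation {K L : Type*} [Field K] [Fintype K] [Field L]
    [Fintype L] [Algebra K L] {q n : ℕ} (hq : Fintype.card K = q)
    (hn : Module.finrank K L = n)
    (α : L) (hα : ∀ x : L, x ≠ 0 → ∃ i : ℕ, x = α ^ i)
    {m : ℕ} (Mbar : Matrix (Fin m) (Fin m) K) (hMbar : IsSuperregular Mbar)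
    (t j : ℕ) (ht : 1 < t) (hj : 1 < j) (hjm : j ≤ m) (hjtn : j * (t - 1) < n)
    (nc : Fin m → Fin m → K) :
    ∀ ω : Equiv.Perm (Fin m),
      IsSuperregular (Matrix.of fun i l : Fin m =>
        if ((ω i : Fin m) : ℕ) < j then
          algebraMap K L (Mbar (ω i) l) * α + algebraMap K L (nc (ω i) l) * α ^ t
        else
          algebraMap K L (Mbar (ω i) l) * α) :=
  isSuperregular_rows_perturbation_general hn α hα Mbar hMbar t j ht hj hjtn nc
end

section
/- Let K be a finite field with q elements, let L be a field extension of K of degree n, let α ∈ L be a primitive element (a generator of Lˣ), let p be the minimal polynomial of α over K, and let C be the companion matrix of p. If t is a positive integer with gcd(t, q^n − 1) = 1, then there exist an injective ring homomorphism ψ' from L to the ring of n×n matrices over K and a primitive element β of L such that ψ'(β) = C^t and the range of ψ' is exactly {0} ∪ {C^i : 0 ≤ i ≤ q^n − 2}. -/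
/-- The companion matrix of a monic polynomial
`p = X^n + c_{n-1} X^{n-1} + ⋯ + c_1 X + c_0`: its `(i, n-1)` entry is `-c_i`,
its `(i+1, i)` entries are `1`, and all other entries are `0`. -/
def companionMatrix {K : Type*} [Field K] (n : ℕ) (p : Polynomial K) :
    Matrix (Fin n) (Fin n) K :=
  Matrix.of fun i j =>
    if (j : ℕ) = n - 1 then -p.coeff i
    else if (i : ℕ) = (j : ℕ) + 1 then 1 else 0

/-!
Multiplication by elements of `L` in the power basis `1, α, …, α^(n-1)` is an injective ring
homomorphism `L →+* Matₙ(K)`, and it sends `α` to the companion matrix `C` of its minimal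
polynomial. Since `α` generates `Lˣ`, which has order `q^n - 1`, the image consists of `0` and the
powers `C^i` with `i ≤ q^n - 2`; and `β = α^t` is again a generator because `t` is invertible
modulo `q^n - 1`.
-/

theorem PowerBasis.leftMulMatrix_gen_eq_companionMatrix {K S : Type*} [Field K] [Ring S]
    [Algebra K S] (pb : PowerBasis K S) :
    Algebra.leftMulMatrix pb.basis pb.gen = companionMatrix pb.dim (minpoly K pb.gen) := by
  rw [pb.leftMulMatrix, pb.minpolyGen_eq]
  ext i j
  have hj : (j : ℕ) + 1 = pb.dim ↔ (j : ℕ) = pb.dim - 1 := by omega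
  simp only [companionMatrix, Matrix.of_apply, hj]

theorem adjoin_eq_top_of_forall_eq_pow {K F : Type*} [CommSemiring K] [Semiring F]
    [Algebra K F] {α : F}
    (hα : ∀ x : F, x ≠ 0 → ∃ i : ℕ, x = α ^ i) : Algebra.adjoin K {α} = ⊤ := by
  refine Algebra.eq_top_iff.mpr fun x => ?_
  rcases eq_or_ne x 0 with rfl | hx
  · exact zero_mem _
  · obtain ⟨i, rfl⟩ := hα x hx
    exact pow_mem (Algebra.self_mem_adjoin_singleton K α) i

section FiniteField

variable {F : Type*} [Field F] [Fintype F]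

theorem FiniteField.card_sub_one_pos : 0 < Fintype.card F - 1 :=
  Nat.sub_pos_of_lt Fintype.one_lt_card

theorem pow_eq_pow_of_modEq_card_sub_one {α : F} (hα : α ≠ 0) {a b : ℕ}
    (h : a ≡ b [MOD Fintype.card F - 1]) : α ^ a = α ^ b := by
  have hα1 := FiniteField.pow_card_sub_one_eq_one α hα
  exact (isOfFinOrder_iff_pow_eq_one.mpr ⟨_, FiniteField.card_sub_one_pos, hα1⟩).pow_eq_pow_iff_modEq.mpr
    (h.of_dvd (orderOf_dvd_of_pow_eq_one hα1))

variable {α : F} (hα : ∀ x : F, x ≠ 0 → ∃ i : ℕ, x = α ^ i)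
include hα

theorem exists_le_card_sub_two_eq_pow {x : F} (hx : x ≠ 0) :
    ∃ i ≤ Fintype.card F - 2, x = α ^ i := by
  obtain ⟨j, rfl⟩ := hα _ hx
  rcases eq_or_ne j 0 with rfl | hj
  · exact ⟨0, Nat.zero_le _, rfl⟩
  have := Nat.mod_lt j (FiniteField.card_sub_one_pos (F := F))
  refine ⟨j % (Fintype.card F - 1), by omega, ?_⟩
  exact pow_eq_pow_of_modEq_card_sub_one (ne_zero_pow hj hx) (Nat.mod_modEq j _).symm

theorem exists_eq_pow_pow_of_coprime {t : ℕ} (ht : t.Coprime (Fintype.card F - 1))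
    {x : F} (hx : x ≠ 0) : ∃ i : ℕ, x = (α ^ t) ^ i := by
  obtain ⟨j, rfl⟩ := hα _ hx
  rcases eq_or_ne j 0 with rfl | hj
  · exact ⟨0, by rw [pow_zero, pow_zero]⟩
  set m := Fintype.card F - 1
  have : NeZero m := ⟨FiniteField.card_sub_one_pos.ne'⟩
  refine ⟨((t : ZMod m)⁻¹).val * j, ?_⟩
  rw [← pow_mul, ← mul_assoc]
  refine pow_eq_pow_of_modEq_card_sub_one (ne_zero_pow hj hx) ?_
  rw [← ZMod.natCast_eq_natCast_iff]
  push_cast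
  rw [ZMod.natCast_zmod_val, ZMod.coe_mul_inv_eq_one t ht, one_mul]

theorem RingHom.range_eq_zero_union_pow {R : Type*} [Semiring R] (ψ : F →+* R) :
    Set.range ψ = {0} ∪ {M | ∃ i ≤ Fintype.card F - 2, M = ψ α ^ i} := by
  ext M
  constructor
  · rintro ⟨x, rfl⟩
    rcases eq_or_ne x 0 with rfl | hx
    · exact Or.inl (map_zero ψ)
    · obtain ⟨i, hi, rfl⟩ := exists_le_card_sub_two_eq_pow hα hx
      exact Or.inr ⟨i, hi, map_pow ψ α i⟩
  · rintro (rfl | ⟨i, -, rfl⟩)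
    · exact ⟨0, map_zero ψ⟩
    · exact ⟨α ^ i, map_pow ψ α i⟩

end FiniteField

theorem exists_ringHom_to_companion_pow_general {K L : Type*} [Field K] [Fintype K] [Field L]
    [Fintype L] [Algebra K L] {q n : ℕ} (hq : Fintype.card K = q)
    (hn : Module.finrank K L = n)
    (α : L) (hα : ∀ x : L, x ≠ 0 → ∃ i : ℕ, x = α ^ i)
    (t : ℕ) (hgcd : Nat.gcd t (q ^ n - 1) = 1) :
    ∃ (ψ' : L →+* Matrix (Fin n) (Fin n) K) (β : L),
      Function.Injective ψ' ∧
      (∀ x : L, x ≠ 0 → ∃ i : ℕ, x = β ^ i) ∧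
      ψ' β = companionMatrix n (minpoly K α) ^ t ∧
      Set.range ψ' =
        {0} ∪ {M | ∃ i : ℕ, i ≤ q ^ n - 2 ∧ M = companionMatrix n (minpoly K α) ^ i} := by
  let pb := PowerBasis.ofAdjoinEqTop (IsIntegral.of_finite K α) (adjoin_eq_top_of_forall_eq_pow hα)
  have hcard : Fintype.card L = q ^ n := hq ▸ hn ▸ Module.card_eq_pow_finrank
  obtain rfl : pb.dim = n := hn ▸ pb.finrank.symm
  let ψ' := (Algebra.leftMulMatrix pb.basis).toRingHom
  have hψα : ψ' α = companionMatrix pb.dim (minpoly K α) :=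
    pb.leftMulMatrix_gen_eq_companionMatrix
  rw [← hcard] at hgcd ⊢
  refine ⟨ψ', α ^ t, Algebra.leftMulMatrix_injective pb.basis,
    fun x hx => exists_eq_pow_pow_of_coprime hα hgcd hx, by rw [map_pow, hψα], ?_⟩
  simpa only [hψα] using ψ'.range_eq_zero_union_pow hα

/-- Let `K` be a finite field with `q` elements, `L` a degree-`n` extension of `K`, `α ∈ L` a
primitive element with minimal polynomial `p` over `K`, and `C` the companion matrix of `p`.
If `t` is a positive integer with `gcd(t, q^n - 1) = 1`, then there are an injective ring
homomorphism `ψ' : L →+* Matₙ(K)` and a primitive element `β` of `L` with `ψ' β = C^t` and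
range of `ψ'` equal to `{0} ∪ {C^i : 0 ≤ i ≤ q^n - 2}`. -/
theorem exists_ringHom_to_companion_pow {K L : Type*} [Field K] [Fintype K] [Field L]
    [Fintype L] [Algebra K L] {q n : ℕ} (hq : Fintype.card K = q)
    (hn : Module.finrank K L = n)
    (α : L) (hα : ∀ x : L, x ≠ 0 → ∃ i : ℕ, x = α ^ i)
    (t : ℕ) (ht : 0 < t) (hgcd : Nat.gcd t (q ^ n - 1) = 1) :
    ∃ (ψ' : L →+* Matrix (Fin n) (Fin n) K) (β : L),
      Function.Injective ψ' ∧
      (∀ x : L, x ≠ 0 → ∃ i : ℕ, x = β ^ i) ∧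
      ψ' β = companionMatrix n (minpoly K α) ^ t ∧
      Set.range ψ' =
        {0} ∪ {M | ∃ i : ℕ, i ≤ q ^ n - 2 ∧ M = companionMatrix n (minpoly K α) ^ i} :=
  exists_ringHom_to_companion_pow_general hq hn α hα t hgcd
end

section
/- Over the field F_7 = ZMod 7, the 2×2 matrix A = [[1,2],[3,4]] is superregular, but the Kronecker product A ⊗ A is not superregular. Hence the Kronecker product of two superregular matrices need not be superregular. -/
instance : Fact (Nat.Prime 7) := ⟨by norm_num⟩

/-- Over `F_7`, the matrix `A = [[1,2],[3,4]]` is superregular, but the Kronecker product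
`A ⊗ A` is not superregular: the Kronecker product of superregular matrices need not be
superregular. -/
theorem kronecker_not_superregular_example :
    IsSuperregular (!![1, 2; 3, 4] : Matrix (Fin 2) (Fin 2) (ZMod 7)) ∧
    ¬ IsSuperregular
        (Matrix.kroneckerMap (· * ·) (!![1, 2; 3, 4] : Matrix (Fin 2) (Fin 2) (ZMod 7))
          (!![1, 2; 3, 4] : Matrix (Fin 2) (Fin 2) (ZMod 7))) := by
  constructor
  · intro k hk r c hr hc
    have hk2 : k ≤ 2 := by
      simpa using Fintype.card_le_of_injective r hr
    interval_cases k
    · rw [Matrix.det_fin_one]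
      obtain ⟨a, b, ha, hb⟩ : ∃ a b, r 0 = a ∧ c 0 = b := ⟨_, _, rfl, rfl⟩
      simp only [Matrix.of_apply, ha, hb]
      fin_cases a <;> fin_cases b <;> decide
    · rw [Matrix.det_fin_two]
      simp only [Matrix.of_apply]
      have h0 : r 0 ≠ r 1 := fun h => absurd (hr h) (by decide)
      have h1 : c 0 ≠ c 1 := fun h => absurd (hc h) (by decide)
      obtain ⟨a, a', ha, ha'⟩ : ∃ a a', r 0 = a ∧ r 1 = a' := ⟨_, _, rfl, rfl⟩
      obtain ⟨b, b', hb, hb'⟩ : ∃ b b', c 0 = b ∧ c 1 = b' := ⟨_, _, rfl, rfl⟩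
      fin_cases a <;> fin_cases a' <;> fin_cases b <;> fin_cases b' <;>
        rw [ha, ha'] at h0 <;> rw [hb, hb'] at h1 <;>
        rw [ha, ha', hb, hb'] <;>
        first
          | exact absurd rfl h0
          | exact absurd rfl h1
          | decide
  · intro h
    have := h 2 (by norm_num) ![(0,0),(1,1)] ![(0,1),(1,0)]
      (by decide) (by decide)
    apply this
    rw [Matrix.det_fin_two]
    decide
end
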